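/- arXiv:1506.03216 — 2 statements merged into one kernel-verified Lean document; each statement's English description precedes it below -/
import Mathlib

section
/- Define the momentum map fibrewise by J(φ) := φ ∘ Tκ_p(e) ∈ T_e^*G for φ ∈ T_p^*P. Then for all p ∈ P, g ∈ G and φ ∈ T_p^*P one has J(T^*κ_g(p)φ) = J(φ) ∘ Ad_g; that is, J is equivariant with respect to the cotangent-lifted action of G on covectors and the coadjoint action Ad^*_{g^{-1}} on T_e^*G. -/
/-!
The action laws give `((pg)h)g⁻¹ = p(ghg⁻¹)` for all `h`. Differentiating both sides at `h = e`
by the chain rule yields `Tκ_{g⁻¹}(pg) ∘ Tκ_{pg}(e) = Tκ_p(e) ∘ Ad_g`; precomposing `φ` gives the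
equivariance.
-/

open Manifold

theorem act_act_inv_eq_act_conj {P G : Type*} [Group G] {κ : P → G → P}
    (hκ_mul : ∀ (p : P) (g h : G), κ (κ p g) h = κ p (g * h)) (p : P) (g h : G) :
    κ (κ (κ p g) h) g⁻¹ = κ p (g * h * g⁻¹) := by
  rw [hκ_mul, hκ_mul, mul_assoc]

section RightAction

variable {𝕜 : Type*} [NontriviallyNormedField 𝕜]
  {E : Type*} [NormedAddCommGroup E] [NormedSpace 𝕜 E] {H : Type*} [TopologicalSpace H]
  {I : ModelWithCorners 𝕜 E H} {G : Type*} [TopologicalSpace G] [ChartedSpace H G] [Group G]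
  {E' : Type*} [NormedAddCommGroup E'] [NormedSpace 𝕜 E'] {H' : Type*} [TopologicalSpace H']
  {I' : ModelWithCorners 𝕜 E' H'} {P : Type*} [TopologicalSpace P] [ChartedSpace H' P]
  {κ : P → G → P}

theorem mdifferentiableAt_conj [ContMDiffMul I 1 G] (g h : G) :
    MDifferentiableAt I I (fun x : G => g * x * g⁻¹) h :=
  mdifferentiableAt_mul_right.comp h mdifferentiableAt_mul_left

theorem mfderiv_act_inv_comp_mfderiv_orbit [ContMDiffMul I 1 G]
    (hκ_one : ∀ p : P, κ p 1 = p) (hκ_mul : ∀ (p : P) (g h : G), κ (κ p g) h = κ p (g * h))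
    (hκ : MDifferentiable (I'.prod I) I' (fun q : P × G => κ q.1 q.2)) (p : P) (g : G) :
    (mfderiv I' I' (fun q : P => κ q g⁻¹) (κ p g)).comp
        (mfderiv I I' (fun h : G => κ (κ p g) h) 1)
      = (mfderiv I I' (fun h : G => κ p h) 1).comp
          (mfderiv I I (fun h : G => g * h * g⁻¹) 1) := by
  have hκ_right (a : G) : MDifferentiable I' I' (fun q : P => κ q a) :=
    hκ.comp (mdifferentiable_id.prodMk mdifferentiable_const)
  have hκ_orbit (q : P) : MDifferentiable I I' (fun h : G => κ q h) :=
    hκ.comp (mdifferentiable_const.prodMk mdifferentiable_id)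
  have h_conj : (fun q : P => κ q g⁻¹) ∘ (fun h : G => κ (κ p g) h)
      = (fun h : G => κ p h) ∘ (fun h : G => g * h * g⁻¹) :=
    funext (act_act_inv_eq_act_conj hκ_mul p g)
  ext v
  have h_left := mfderiv_comp_apply_of_eq 1 (hκ_right g⁻¹ _) (hκ_orbit (κ p g) 1) (hκ_one _) v
  have h_right := mfderiv_comp_apply_of_eq 1 (hκ_orbit p 1) (mdifferentiableAt_conj g 1)
    (by simp) v
  rw [h_conj] at h_left
  exact h_left.symm.trans h_right

end RightAction

theorem momentum_map_equivariance_general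
    {E : Type*} [NormedAddCommGroup E] [NormedSpace ℝ E]
    {G : Type*} [TopologicalSpace G] [ChartedSpace E G] [Group G]
    [LieGroup 𝓘(ℝ, E) (⊤ : ℕ∞) G]
    {F : Type*} [NormedAddCommGroup F] [NormedSpace ℝ F]
    {P : Type*} [TopologicalSpace P] [ChartedSpace F P]
    (κ : P → G → P)
    (hκ_one : ∀ p : P, κ p 1 = p)
    (hκ_mul : ∀ (p : P) (g h : G), κ (κ p g) h = κ p (g * h))
    (hκ_smooth : ContMDiff (𝓘(ℝ, F).prod 𝓘(ℝ, E)) 𝓘(ℝ, F) (⊤ : ℕ∞)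
      (fun q : P × G => κ q.1 q.2))
    (p : P) (g : G) (φ : TangentSpace 𝓘(ℝ, F) p →L[ℝ] ℝ) :
    ((φ.comp (mfderiv 𝓘(ℝ, F) 𝓘(ℝ, F) (fun q : P => κ q g⁻¹) (κ p g))).comp
        (mfderiv 𝓘(ℝ, E) 𝓘(ℝ, F) (fun h : G => κ (κ p g) h) (1 : G)))
      = ((φ.comp (mfderiv 𝓘(ℝ, E) 𝓘(ℝ, F) (fun h : G => κ p h) (1 : G))).comp
          (mfderiv 𝓘(ℝ, E) 𝓘(ℝ, E) (fun h : G => g * h * g⁻¹) (1 : G))) := by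
  ext v
  exact congrArg (fun L => φ (L v))
    (mfderiv_act_inv_comp_mfderiv_orbit hκ_one hκ_mul (hκ_smooth.mdifferentiable (by simp)) p g)

/-- The momentum map `J(φ) := φ ∘ Tκ_p(e)` is equivariant: for the cotangent-lifted
action `T^*κ_g(p)φ := φ ∘ Tκ_{g⁻¹}(pg)` one has `J(T^*κ_g(p)φ) = J(φ) ∘ Ad_g`. -/
theorem momentum_map_equivariance
    {E : Type*} [NormedAddCommGroup E] [NormedSpace ℝ E] [FiniteDimensional ℝ E]
    {G : Type*} [TopologicalSpace G] [ChartedSpace E G] [Group G]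
    [IsManifold 𝓘(ℝ, E) (⊤ : ℕ∞) G] [LieGroup 𝓘(ℝ, E) (⊤ : ℕ∞) G]
    {F : Type*} [NormedAddCommGroup F] [NormedSpace ℝ F] [FiniteDimensional ℝ F]
    {P : Type*} [TopologicalSpace P] [ChartedSpace F P]
    [IsManifold 𝓘(ℝ, F) (⊤ : ℕ∞) P]
    (κ : P → G → P)
    (hκ_one : ∀ p : P, κ p 1 = p)
    (hκ_mul : ∀ (p : P) (g h : G), κ (κ p g) h = κ p (g * h))
    (hκ_smooth : ContMDiff (𝓘(ℝ, F).prod 𝓘(ℝ, E)) 𝓘(ℝ, F) (⊤ : ℕ∞)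
      (fun q : P × G => κ q.1 q.2))
    (p : P) (g : G) (φ : TangentSpace 𝓘(ℝ, F) p →L[ℝ] ℝ) :
    ((φ.comp (mfderiv 𝓘(ℝ, F) 𝓘(ℝ, F) (fun q : P => κ q g⁻¹) (κ p g))).comp
        (mfderiv 𝓘(ℝ, E) 𝓘(ℝ, F) (fun h : G => κ (κ p g) h) (1 : G)))
      = ((φ.comp (mfderiv 𝓘(ℝ, E) 𝓘(ℝ, F) (fun h : G => κ p h) (1 : G))).comp
          (mfderiv 𝓘(ℝ, E) 𝓘(ℝ, E) (fun h : G => g * h * g⁻¹) (1 : G))) :=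
  momentum_map_equivariance_general κ hκ_one hκ_mul hκ_smooth p g φ
end

section
/- Let k ∈ K, u ∈ N and h := σ(k)ι(u), and let φ ∈ T_h^*H, θ ∈ T_k^*K, χ ∈ T_u^*N be covectors satisfying φ ∘ T(R_{ι(u)} ∘ σ)(k) = θ and φ ∘ T(L_{σ(k)} ∘ ι)(u) = χ. Then φ ∘ T(L_h ∘ ι)(e) = χ ∘ TL^N_u(e), where L^N_u denotes left translation by u in N; that is, the N-momentum φ ∘ TL_h(e) ∘ Tι(e) of φ equals the momentum J_N(χ) := χ ∘ TL^N_u(e) of χ. -/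
open Manifold

/-! Since `ι` is a homomorphism, `L_h ∘ ι = (L_{σ(k)} ∘ ι) ∘ L^N_u` with `h = σ(k) ι(u)`, so by the
chain rule `T(L_h ∘ ι)(e) = T(L_{σ(k)} ∘ ι)(u) ∘ TL^N_u(e)`; composing with `φ` and using the
definition of `χ` gives the claim. -/

theorem mfderiv_mul_left_comp_map_mul
    {𝕜 : Type*} [NontriviallyNormedField 𝕜]
    {E : Type*} [NormedAddCommGroup E] [NormedSpace 𝕜 E] {HG : Type*} [TopologicalSpace HG]
    {I : ModelWithCorners 𝕜 E HG} {G : Type*} [Semigroup G] [TopologicalSpace G]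
    [ChartedSpace HG G] [ContMDiffMul I 1 G]
    {F : Type*} [NormedAddCommGroup F] [NormedSpace 𝕜 F] {HN : Type*} [TopologicalSpace HN]
    {J : ModelWithCorners 𝕜 F HN} {N : Type*} [Monoid N] [TopologicalSpace N]
    [ChartedSpace HN N] [ContMDiffMul J 1 N]
    {ι : N → G} (hι_hom : ∀ a b, ι (a * b) = ι a * ι b) {u : N} (hι : MDifferentiableAt J I ι u)
    (a : G) :
    mfderiv J I (fun n => a * ι u * ι n) 1
      = (mfderiv J I (fun n => a * ι n) u).comp (mfderiv J J (u * ·) 1) := by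
  have hfactor : (fun n => a * ι u * ι n) = (fun n => a * ι n) ∘ (u * ·) := by
    funext n
    simp only [Function.comp_apply, hι_hom, mul_assoc]
  have hdiff : MDifferentiableAt J I (fun n => a * ι n) (u * 1) := by
    rw [mul_one]
    exact mdifferentiableAt_mul_left.comp u hι
  rw [hfactor, mfderiv_comp 1 hdiff mdifferentiableAt_mul_left, mul_one]

theorem covector_momentum_factorization_general
    {EH : Type*} [NormedAddCommGroup EH] [NormedSpace ℝ EH]
    {H : Type*} [TopologicalSpace H] [ChartedSpace EH H] [Group H]
    [LieGroup 𝓘(ℝ, EH) (⊤ : ℕ∞) H]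
    {K : Type*}
    {EN : Type*} [NormedAddCommGroup EN] [NormedSpace ℝ EN]
    {N : Type*} [TopologicalSpace N] [ChartedSpace EN N] [Group N]
    [LieGroup 𝓘(ℝ, EN) (⊤ : ℕ∞) N]
    (ι : N → H) (hι_hom : ∀ a b : N, ι (a * b) = ι a * ι b)
    (hι_smooth : ContMDiff 𝓘(ℝ, EN) 𝓘(ℝ, EH) (⊤ : ℕ∞) ι)
    (σ : K → H)
    (k : K) (u : N)
    (φ : TangentSpace 𝓘(ℝ, EH) (σ k * ι u) →L[ℝ] ℝ)
    (χ : TangentSpace 𝓘(ℝ, EN) u →L[ℝ] ℝ)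
    (hχ : φ.comp (mfderiv 𝓘(ℝ, EN) 𝓘(ℝ, EH) (fun n : N => σ k * ι n) u) = χ) :
    φ.comp (mfderiv 𝓘(ℝ, EN) 𝓘(ℝ, EH) (fun n : N => (σ k * ι u) * ι n) (1 : N))
      = χ.comp (mfderiv 𝓘(ℝ, EN) 𝓘(ℝ, EN) (fun n : N => u * n) (1 : N)) := by
  rw [mfderiv_mul_left_comp_map_mul hι_hom (hι_smooth.mdifferentiableAt (by simp)), ← hχ]
  exact (ContinuousLinearMap.comp_assoc _ _ _).symm

/-- For `h := σ(k)ι(u)` and covectors `φ, θ, χ` with `φ ∘ T(R_{ι(u)} ∘ σ)(k) = θ` and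
`φ ∘ T(L_{σ(k)} ∘ ι)(u) = χ`, one has `φ ∘ T(L_h ∘ ι)(e) = χ ∘ TL^N_u(e)`; that is,
the `N`-momentum of `φ` equals the momentum `J_N(χ) = χ ∘ TL^N_u(e)` of `χ`. -/
theorem covector_momentum_factorization
    {EH : Type*} [NormedAddCommGroup EH] [NormedSpace ℝ EH] [FiniteDimensional ℝ EH]
    {H : Type*} [TopologicalSpace H] [ChartedSpace EH H] [Group H]
    [IsManifold 𝓘(ℝ, EH) (⊤ : ℕ∞) H] [LieGroup 𝓘(ℝ, EH) (⊤ : ℕ∞) H]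
    {EK : Type*} [NormedAddCommGroup EK] [NormedSpace ℝ EK] [FiniteDimensional ℝ EK]
    {K : Type*} [TopologicalSpace K] [ChartedSpace EK K] [Group K]
    [IsManifold 𝓘(ℝ, EK) (⊤ : ℕ∞) K] [LieGroup 𝓘(ℝ, EK) (⊤ : ℕ∞) K]
    {EN : Type*} [NormedAddCommGroup EN] [NormedSpace ℝ EN] [FiniteDimensional ℝ EN]
    {N : Type*} [TopologicalSpace N] [ChartedSpace EN N] [Group N]
    [IsManifold 𝓘(ℝ, EN) (⊤ : ℕ∞) N] [LieGroup 𝓘(ℝ, EN) (⊤ : ℕ∞) N]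
    (ι : N → H) (hι_hom : ∀ a b : N, ι (a * b) = ι a * ι b)
    (hι_inj : Function.Injective ι)
    (hι_emb : Topology.IsEmbedding ι)
    (hι_smooth : ContMDiff 𝓘(ℝ, EN) 𝓘(ℝ, EH) (⊤ : ℕ∞) ι)
    (μ : H → K) (hμ_hom : ∀ a b : H, μ (a * b) = μ a * μ b)
    (hμ_surj : Function.Surjective μ)
    (hμ_smooth : ContMDiff 𝓘(ℝ, EH) 𝓘(ℝ, EK) (⊤ : ℕ∞) μ)
    (hμ_ker : ∀ h : H, μ h = 1 ↔ h ∈ Set.range ι)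
    (σ : K → H) (hσ_smooth : ContMDiff 𝓘(ℝ, EK) 𝓘(ℝ, EH) (⊤ : ℕ∞) σ)
    (hμσ : ∀ k : K, μ (σ k) = k) (hσ1 : σ 1 = 1)
    (k : K) (u : N)
    (φ : TangentSpace 𝓘(ℝ, EH) (σ k * ι u) →L[ℝ] ℝ)
    (θ : TangentSpace 𝓘(ℝ, EK) k →L[ℝ] ℝ)
    (χ : TangentSpace 𝓘(ℝ, EN) u →L[ℝ] ℝ)
    (hθ : φ.comp (mfderiv 𝓘(ℝ, EK) 𝓘(ℝ, EH) (fun x : K => σ x * ι u) k) = θ)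
    (hχ : φ.comp (mfderiv 𝓘(ℝ, EN) 𝓘(ℝ, EH) (fun n : N => σ k * ι n) u) = χ) :
    φ.comp (mfderiv 𝓘(ℝ, EN) 𝓘(ℝ, EH) (fun n : N => (σ k * ι u) * ι n) (1 : N))
      = χ.comp (mfderiv 𝓘(ℝ, EN) 𝓘(ℝ, EN) (fun n : N => u * n) (1 : N)) :=
  covector_momentum_factorization_general ι hι_hom hι_smooth σ k u φ χ hχ
end
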